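/- Let x_{n,m} = A_{n,m}† A x† with x† ∈ N(A)^⊥. Then x_{n,m} ⇀ x† (weakly) as n, m → ∞ if and only if sup_{n,m} ‖x_{n,m}‖ < ∞ and Π_{N(A)} x_{n,m} ⇀ 0. -/

import Mathlib

open ContinuousLinearMap Filter Topology
open scoped RealInnerProductSpace

noncomputable section

/-- Orthogonal projection onto a subspace, as an endomorphism. -/
noncomputable def proj {E : Type*} [NormedAddCommGroup E] [InnerProductSpace ℝ E]
    (K : Submodule ℝ E) [Submodule.HasOrthogonalProjection K] : E →L[ℝ] E :=
  K.subtypeL.comp (K.orthogonalProjectionOnto : E →L[ℝ] K)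

section Aux

variable {E F : Type*} [NormedAddCommGroup E] [InnerProductSpace ℝ E]
  [NormedAddCommGroup F] [InnerProductSpace ℝ F]

lemma proj_mem (K : Submodule ℝ E) [Submodule.HasOrthogonalProjection K] (x : E) : proj K x ∈ K :=
  (K.orthogonalProjectionOnto x).2

lemma proj_eq_self (K : Submodule ℝ E) [Submodule.HasOrthogonalProjection K] {x : E} (h : x ∈ K) :
    proj K x = x := Submodule.starProjection_eq_self_iff.mpr h

lemma proj_idem (K : Submodule ℝ E) [Submodule.HasOrthogonalProjection K] (x : E) :
    proj K (proj K x) = proj K x := proj_eq_self K (proj_mem K x)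

lemma proj_zero_of_orth (K : Submodule ℝ E) [Submodule.HasOrthogonalProjection K] {x : E} (h : x ∈ Kᗮ) :
    proj K x = 0 := by
  have := Submodule.orthogonalProjectionOnto_apply_of_mem_orthogonal h
  simp only [_root_.proj, ContinuousLinearMap.comp_apply, this]
  rfl

lemma norm_proj_le (K : Submodule ℝ E) [Submodule.HasOrthogonalProjection K] (x : E) :
    ‖proj K x‖ ≤ ‖x‖ := by
  have h1 : ‖proj K x‖ = ‖K.orthogonalProjectionOnto x‖ := rfl
  calc ‖proj K x‖ = ‖K.orthogonalProjectionOnto x‖ := h1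
    _ ≤ ‖K.orthogonalProjectionOnto‖ * ‖x‖ := K.orthogonalProjectionOnto.le_opNorm x
    _ ≤ 1 * ‖x‖ := mul_le_mul_of_nonneg_right (Submodule.orthogonalProjectionOnto_norm_le K) (norm_nonneg x)
    _ = ‖x‖ := one_mul _

lemma proj_adjoint [CompleteSpace E] (K : Submodule ℝ E) [CompleteSpace K] :
    ContinuousLinearMap.adjoint (proj K) = proj K :=
  ContinuousLinearMap.isSelfAdjoint_iff'.mp (isSelfAdjoint_starProjection K)

lemma inner_proj_left [CompleteSpace E] (K : Submodule ℝ E) [CompleteSpace K] (x y : E) :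
    ⟪proj K x, y⟫ = ⟪x, proj K y⟫ := by
  conv_lhs => rw [← proj_adjoint K]
  exact ContinuousLinearMap.adjoint_inner_left _ y x

/-- On a finite-dimensional subspace, pointwise convergence to zero of operators is uniform. -/
lemma shrink (V : Submodule ℝ E) [FiniteDimensional ℝ V] (S : ℕ → E →L[ℝ] F)
    (hS : ∀ v : E, v ∈ V → Tendsto (fun k => S k v) atTop (𝓝 0)) {ε : ℝ} (hε : 0 < ε) :
    ∃ K : ℕ, ∀ k ≥ K, ∀ v ∈ V, ‖S k v‖ ≤ ε * ‖v‖ := by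
  set b := stdOrthonormalBasis ℝ V with hb
  have hsum : Tendsto (fun k => ∑ i, ‖S k (b i : E)‖) atTop (𝓝 0) := by
    have h0 : ∀ i : Fin (Module.finrank ℝ V), Tendsto (fun k => ‖S k (b i : E)‖) atTop (𝓝 0) := by
      intro i
      simpa using (hS (b i) (b i).2).norm
    simpa using tendsto_finset_sum Finset.univ (fun i _ => h0 i)
  have hev : ∀ᶠ k in atTop, ∑ i, ‖S k (b i : E)‖ < ε := hsum.eventually_lt_const hε
  obtain ⟨K, hK⟩ := eventually_atTop.mp hev
  refine ⟨K, fun k hk v hv => ?_⟩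
  set v' : V := ⟨v, hv⟩ with hv'
  have hrepr : (∑ i, b.repr v' i • (b i : E)) = v := by
    have h2 := b.sum_repr v'
    calc (∑ i, b.repr v' i • (b i : E)) = ((∑ i, b.repr v' i • b i : V) : E) := by
          push_cast; rfl
      _ = v := by rw [h2]
  have hSv : S k v = ∑ i, b.repr v' i • S k (b i : E) := by
    rw [← hrepr]; simp
  have hcoef : ∀ i, |b.repr v' i| ≤ ‖v‖ := by
    intro i
    have : b.repr v' i = ⟪(b i : V), v'⟫ := b.repr_apply_apply v' i
    rw [this]
    calc |⟪(b i : V), v'⟫| ≤ ‖(b i : V)‖ * ‖v'‖ := abs_real_inner_le_norm _ _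
      _ = ‖v‖ := by rw [b.orthonormal.1 i]; simp [hv']
  calc ‖S k v‖ ≤ ∑ i, ‖b.repr v' i • S k (b i : E)‖ := by rw [hSv]; exact norm_sum_le _ _
    _ ≤ ∑ i, ‖v‖ * ‖S k (b i : E)‖ := by
        refine Finset.sum_le_sum fun i _ => ?_
        rw [norm_smul]
        exact mul_le_mul_of_nonneg_right (by simpa using hcoef i) (norm_nonneg _)
    _ = (∑ i, ‖S k (b i : E)‖) * ‖v‖ := by rw [← Finset.mul_sum, mul_comm]
    _ ≤ ε * ‖v‖ := mul_le_mul_of_nonneg_right (hK k hk).le (norm_nonneg _)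

/-- An operator injective on a finite-dimensional subspace is bounded below there. -/
lemma lowerBound (V : Submodule ℝ E) [FiniteDimensional ℝ V] (S : E →L[ℝ] F)
    (hinj : ∀ v ∈ V, S v = 0 → v = 0) : ∃ c : ℝ, 0 < c ∧ ∀ v ∈ V, c * ‖v‖ ≤ ‖S v‖ := by
  set L : V →ₗ[ℝ] F := (S.comp V.subtypeL).toLinearMap with hL
  have hker : LinearMap.ker L = ⊥ := by
    rw [LinearMap.ker_eq_bot']
    intro v hv
    exact Subtype.ext (hinj v v.2 hv)
  obtain ⟨K, hK0, hK⟩ := L.exists_antilipschitzWith hker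
  have hK0' : (0:ℝ) < (K:ℝ) := by exact_mod_cast hK0
  refine ⟨(K:ℝ)⁻¹, by positivity, fun v hv => ?_⟩
  have h1 : dist (⟨v, hv⟩ : V) 0 ≤ (K:ℝ) * dist (L ⟨v, hv⟩) (L 0) := hK.le_mul_dist _ _
  rw [map_zero, dist_zero_right, dist_zero_right] at h1
  have h2 : ‖v‖ ≤ (K:ℝ) * ‖S v‖ := by
    have : ‖(⟨v, hv⟩ : V)‖ = ‖v‖ := rfl
    rw [this] at h1
    exact h1
  rw [inv_mul_le_iff₀ hK0']
  linarith [h2]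

end Aux

/-- The discretized operator `A_{n,m} = Q_m A P_n`. -/
noncomputable def Amn {X Y : Type*} [NormedAddCommGroup X] [InnerProductSpace ℝ X]
    [NormedAddCommGroup Y] [InnerProductSpace ℝ Y]
    (A : X →L[ℝ] Y) (Xn : Submodule ℝ X) (Ym : Submodule ℝ Y)
    [Submodule.HasOrthogonalProjection Xn] [Submodule.HasOrthogonalProjection Ym] : X →L[ℝ] Y :=
  (proj Ym).comp (A.comp (proj Xn))

/-- `B` is the Moore–Penrose pseudoinverse of `A` (the four Penrose conditions). -/
def IsPseudoinverse {X Y : Type*} [NormedAddCommGroup X] [InnerProductSpace ℝ X]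
    [CompleteSpace X] [NormedAddCommGroup Y] [InnerProductSpace ℝ Y] [CompleteSpace Y]
    (A : X →L[ℝ] Y) (B : Y →L[ℝ] X) : Prop :=
  A.comp (B.comp A) = A ∧ B.comp (A.comp B) = B ∧
  ContinuousLinearMap.adjoint (A.comp B) = A.comp B ∧
  ContinuousLinearMap.adjoint (B.comp A) = B.comp A

set_option maxHeartbeats 1600000 in
/-- `x_{n,m} ⇀ x†` weakly iff `sup ‖x_{n,m}‖ < ∞` and `Π_{N(A)} x_{n,m} ⇀ 0`. -/
theorem stmt_17 {X Y : Type*} [NormedAddCommGroup X] [InnerProductSpace ℝ X] [CompleteSpace X]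
    [NormedAddCommGroup Y] [InnerProductSpace ℝ Y] [CompleteSpace Y]
    (A : X →L[ℝ] Y) (Xn : ℕ → Submodule ℝ X) (Ym : ℕ → Submodule ℝ Y)
    [∀ n, FiniteDimensional ℝ (Xn n)] [∀ m, FiniteDimensional ℝ (Ym m)]
    (hX : Monotone Xn) (hY : Monotone Ym)
    (hdX : Dense (↑(⨆ n, Xn n) : Set X)) (hdY : Dense (↑(⨆ m, Ym m) : Set Y))
    (Adag : ℕ → ℕ → (Y →L[ℝ] X))
    (hdag : ∀ n m, IsPseudoinverse (Amn A (Xn n) (Ym m)) (Adag n m))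
    [Submodule.HasOrthogonalProjection (LinearMap.ker (A : X →ₗ[ℝ] Y))]
    (xd : X) (hxd : xd ∈ (LinearMap.ker (A : X →ₗ[ℝ] Y))ᗮ) :
    (∀ z : X, Tendsto (fun p : ℕ × ℕ => @inner ℝ X _ (Adag p.1 p.2 (A xd)) z)
        atTop (nhds (@inner ℝ X _ xd z))) ↔
    ((∃ C : ℝ, ∀ p : ℕ × ℕ, ‖Adag p.1 p.2 (A xd)‖ ≤ C) ∧
      ∀ z : X, Tendsto
        (fun p : ℕ × ℕ => @inner ℝ X _ (proj (LinearMap.ker (A : X →ₗ[ℝ] Y)) (Adag p.1 p.2 (A xd))) z)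
        atTop (nhds 0)) := by
  classical
  haveI hkerc : CompleteSpace (LinearMap.ker (A : X →ₗ[ℝ] Y)) :=
    (ContinuousLinearMap.isClosed_ker A).completeSpace_coe
  -- basic facts about adjoints of the discretized operators
  have hTadjop : ∀ n m, ContinuousLinearMap.adjoint (Amn A (Xn n) (Ym m))
      = ((_root_.proj (Xn n)).comp (ContinuousLinearMap.adjoint A)).comp (_root_.proj (Ym m)) := by
    intro n m
    rw [Amn, ContinuousLinearMap.adjoint_comp, ContinuousLinearMap.adjoint_comp,
      proj_adjoint, proj_adjoint]
  have hTadj : ∀ n m (w : Y), ContinuousLinearMap.adjoint (Amn A (Xn n) (Ym m)) w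
      = _root_.proj (Xn n) (ContinuousLinearMap.adjoint A (_root_.proj (Ym m) w)) := by
    intro n m w
    rw [hTadjop n m]; rfl
  -- pointwise Penrose identities
  have hxTB : ∀ n m (w : Y), Adag n m (Amn A (Xn n) (Ym m) (Adag n m w)) = Adag n m w :=
    fun n m w => by simpa using DFunLike.congr_fun (hdag n m).2.1 w
  have hTBT : ∀ n m (v : X),
      Amn A (Xn n) (Ym m) (Adag n m (Amn A (Xn n) (Ym m) v)) = Amn A (Xn n) (Ym m) v :=
    fun n m v => by simpa using DFunLike.congr_fun (hdag n m).1 v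
  have hBT_adj : ∀ n m (v : X), Adag n m (Amn A (Xn n) (Ym m) v)
      = ContinuousLinearMap.adjoint (Amn A (Xn n) (Ym m))
          (ContinuousLinearMap.adjoint (Adag n m) v) := by
    intro n m v
    have h4 := (hdag n m).2.2.2
    have h := DFunLike.congr_fun h4 v
    rw [ContinuousLinearMap.adjoint_comp] at h
    simpa using h.symm
  have hTB_adj : ∀ n m (w : Y), Amn A (Xn n) (Ym m) (Adag n m w)
      = ContinuousLinearMap.adjoint (Adag n m)
          (ContinuousLinearMap.adjoint (Amn A (Xn n) (Ym m)) w) := by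
    intro n m w
    have h3 := (hdag n m).2.2.1
    have h := DFunLike.congr_fun h3 w
    rw [ContinuousLinearMap.adjoint_comp] at h
    simpa using h.symm
  have hPx : ∀ n m (w : Y), _root_.proj (Xn n) (Adag n m w) = Adag n m w := by
    intro n m w
    conv_lhs => rw [← hxTB n m w]
    rw [hBT_adj n m (Adag n m w), hTadj n m _, proj_idem, ← hTadj n m _, ← hBT_adj n m _,
      hxTB n m w]
  have hBQ : ∀ n m (w : Y), Adag n m (_root_.proj (Ym m) w) = Adag n m w := by
    intro n m w
    conv_lhs => rw [← hxTB n m (_root_.proj (Ym m) w)]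
    conv_rhs => rw [← hxTB n m w]
    suffices h : Amn A (Xn n) (Ym m) (Adag n m (_root_.proj (Ym m) w))
        = Amn A (Xn n) (Ym m) (Adag n m w) by rw [h]
    rw [hTB_adj n m (_root_.proj (Ym m) w), hTB_adj n m w, hTadj n m _, hTadj n m _, proj_idem]
  have hxPv : ∀ n m, Adag n m (A xd)
      = _root_.proj (Xn n) (ContinuousLinearMap.adjoint A (_root_.proj (Ym m)
          (ContinuousLinearMap.adjoint (Adag n m) (Adag n m (A xd))))) := by
    intro n m
    conv_lhs => rw [← hxTB n m (A xd), hBT_adj n m (Adag n m (A xd)), hTadj n m _]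
  have hQAx : ∀ n m, _root_.proj (Ym m) (A (Adag n m (A xd)))
      = Amn A (Xn n) (Ym m) (Adag n m (A xd)) := by
    intro n m
    have : Amn A (Xn n) (Ym m) (Adag n m (A xd))
        = _root_.proj (Ym m) (A (_root_.proj (Xn n) (Adag n m (A xd)))) := rfl
    rw [this, hPx n m (A xd)]
  -- the least-squares estimate
  have hE1 : ∀ n m, ‖Amn A (Xn n) (Ym m) (Adag n m (A xd)) - _root_.proj (Ym m) (A xd)‖
      ≤ ‖A‖ * ‖xd - _root_.proj (Xn n) xd‖ := by
    intro n m
    set T := Amn A (Xn n) (Ym m) with hT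
    set B := Adag n m with hB
    set w := _root_.proj (Ym m) (A xd) with hw
    have hBw : B w = B (A xd) := hBQ n m (A xd)
    set r := w - T (B w) with hr
    have hrT : ∀ z : X, @inner ℝ Y _ r (T z) = 0 := by
      intro z
      have h3 := (hdag n m).2.2.1
      have h1 : ∀ u : X, T (B (T u)) = T u := fun u => hTBT n m u
      have e1 : @inner ℝ Y _ (T (B w)) (T z) = @inner ℝ Y _ w (T (B (T z))) := by
        calc @inner ℝ Y _ (T (B w)) (T z) = @inner ℝ Y _ ((T.comp B) w) (T z) := rfl
          _ = @inner ℝ Y _ ((ContinuousLinearMap.adjoint (T.comp B)) w) (T z) := by rw [h3]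
          _ = @inner ℝ Y _ w ((T.comp B) (T z)) :=
              ContinuousLinearMap.adjoint_inner_left _ _ _
          _ = @inner ℝ Y _ w (T (B (T z))) := rfl
      rw [hr, inner_sub_left, e1, h1 z, sub_self]
    have key : ‖r‖ ≤ ‖w - T (_root_.proj (Xn n) xd)‖ := by
      have hd : w - T (_root_.proj (Xn n) xd) = r + (T (B w) - T (_root_.proj (Xn n) xd)) := by
        rw [hr]; abel
      have hrd : @inner ℝ Y _ r (T (B w) - T (_root_.proj (Xn n) xd)) = 0 := by
        rw [← map_sub]; exact hrT _
      have hsq : ‖w - T (_root_.proj (Xn n) xd)‖ ^ 2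
          = ‖r‖ ^ 2 + ‖T (B w) - T (_root_.proj (Xn n) xd)‖ ^ 2 := by
        rw [hd, norm_add_sq_real, hrd]; ring
      nlinarith [norm_nonneg r, norm_nonneg (w - T (_root_.proj (Xn n) xd)),
        sq_nonneg ‖T (B w) - T (_root_.proj (Xn n) xd)‖]
    have hTu : T (_root_.proj (Xn n) xd)
        = _root_.proj (Ym m) (A (_root_.proj (Xn n) xd)) := by
      have : T (_root_.proj (Xn n) xd)
          = _root_.proj (Ym m) (A (_root_.proj (Xn n) (_root_.proj (Xn n) xd))) := rfl
      rw [this, proj_idem]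
    have h2 : ‖w - T (_root_.proj (Xn n) xd)‖ ≤ ‖A‖ * ‖xd - _root_.proj (Xn n) xd‖ := by
      rw [hTu, hw, ← map_sub]
      calc ‖_root_.proj (Ym m) (A xd - A (_root_.proj (Xn n) xd))‖
          ≤ ‖A xd - A (_root_.proj (Xn n) xd)‖ := norm_proj_le _ _
        _ = ‖A (xd - _root_.proj (Xn n) xd)‖ := by rw [map_sub]
        _ ≤ ‖A‖ * ‖xd - _root_.proj (Xn n) xd‖ := A.le_opNorm _
    calc ‖T (B (A xd)) - w‖ = ‖r‖ := by rw [← hBw, hr, norm_sub_rev]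
      _ ≤ _ := le_trans key h2
  -- global bound on ‖T x_{n,m}‖
  set Cy : ℝ := ‖A xd‖ + ‖A‖ * (2 * ‖xd‖) with hCydef
  have hCy0 : 0 ≤ Cy := by positivity
  have hCy : ∀ n m, ‖Amn A (Xn n) (Ym m) (Adag n m (A xd))‖ ≤ Cy := by
    intro n m
    have h1 := hE1 n m
    have h2 : ‖xd - _root_.proj (Xn n) xd‖ ≤ 2 * ‖xd‖ := by
      have := norm_sub_le xd (_root_.proj (Xn n) xd)
      have := norm_proj_le (Xn n) xd
      linarith
    have h3 : ‖A‖ * ‖xd - _root_.proj (Xn n) xd‖ ≤ ‖A‖ * (2 * ‖xd‖) :=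
      mul_le_mul_of_nonneg_left h2 (norm_nonneg _)
    have h4 : ‖_root_.proj (Ym m) (A xd)‖ ≤ ‖A xd‖ := norm_proj_le _ _
    have h5 := norm_add_le (Amn A (Xn n) (Ym m) (Adag n m (A xd)) - _root_.proj (Ym m) (A xd))
      (_root_.proj (Ym m) (A xd))
    rw [sub_add_cancel] at h5
    rw [hCydef]; linarith
  -- strong convergence of the projections
  have hPlim : ∀ u : X, Tendsto (fun n => _root_.proj (Xn n) u) atTop (𝓝 u) := by
    intro u
    have h := Submodule.starProjection_tendsto_self Xn hX u
      (le_of_eq (Submodule.dense_iff_topologicalClosure_eq_top.mp hdX).symm)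
    exact h
  have hQlim : ∀ u : Y, Tendsto (fun m => _root_.proj (Ym m) u) atTop (𝓝 u) := by
    intro u
    have h := Submodule.starProjection_tendsto_self Ym hY u
      (le_of_eq (Submodule.dense_iff_topologicalClosure_eq_top.mp hdY).symm)
    exact h
  have hfst : Tendsto (fun p : ℕ × ℕ => p.1) atTop atTop := by
    rw [← prod_atTop_atTop_eq]; exact tendsto_fst
  have hsnd : Tendsto (fun p : ℕ × ℕ => p.2) atTop atTop := by
    rw [← prod_atTop_atTop_eq]; exact tendsto_snd
  -- row bounds
  have hrow : ∀ n : ℕ, ∃ Cr : ℝ, ∀ m : ℕ, ‖Adag n m (A xd)‖ ≤ Cr := by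
    intro n
    set K : Submodule ℝ X := Xn n ⊓ LinearMap.ker (A : X →ₗ[ℝ] Y) with hK
    set W : Submodule ℝ X := Xn n ⊓ Kᗮ with hWdef
    haveI : FiniteDimensional ℝ W := Submodule.finiteDimensional_of_le inf_le_left
    have hxW : ∀ m, Adag n m (A xd) ∈ W := by
      intro m
      refine Submodule.mem_inf.mpr ⟨?_, ?_⟩
      · rw [← hPx n m (A xd)]; exact proj_mem _ _
      · rw [Submodule.mem_orthogonal]
        intro u hu
        obtain ⟨hu1, hu2⟩ := Submodule.mem_inf.mp hu
        have e1 : Adag n m (A xd) = ContinuousLinearMap.adjoint (Amn A (Xn n) (Ym m))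
            (ContinuousLinearMap.adjoint (Adag n m) (Adag n m (A xd))) := by
          conv_lhs => rw [← hxTB n m (A xd), hBT_adj n m (Adag n m (A xd))]
        rw [e1, ContinuousLinearMap.adjoint_inner_right]
        have hTu : Amn A (Xn n) (Ym m) u = 0 := by
          have : Amn A (Xn n) (Ym m) u
              = _root_.proj (Ym m) (A (_root_.proj (Xn n) u)) := rfl
          rw [this, proj_eq_self _ hu1, (show A u = 0 from LinearMap.mem_ker.mp hu2), map_zero]
        rw [hTu, inner_zero_left]
    obtain ⟨c, hc0, hc⟩ := lowerBound W A (fun v hv hAv => by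
      obtain ⟨hv1, hv2⟩ := Submodule.mem_inf.mp hv
      have hvK : v ∈ K := Submodule.mem_inf.mpr ⟨hv1, LinearMap.mem_ker.mpr hAv⟩
      exact inner_self_eq_zero.mp ((Submodule.mem_orthogonal _ _).mp hv2 v hvK))
    obtain ⟨M, hM⟩ := shrink W (fun k => A - (_root_.proj (Ym k)).comp A)
      (by
        intro v hv
        have h0 : Tendsto (fun k => A v - _root_.proj (Ym k) (A v)) atTop (𝓝 (A v - A v)) :=
          tendsto_const_nhds.sub (hQlim (A v))
        simpa using h0) (half_pos hc0)
    refine ⟨Cy / (c/2) + ∑ j ∈ Finset.range M, ‖Adag n j (A xd)‖, fun m => ?_⟩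
    have hsum0 : 0 ≤ ∑ j ∈ Finset.range M, ‖Adag n j (A xd)‖ :=
      Finset.sum_nonneg fun j _ => norm_nonneg _
    have hq0 : 0 ≤ Cy / (c/2) := by positivity
    by_cases hm : M ≤ m
    · have h1 : c * ‖Adag n m (A xd)‖ ≤ ‖A (Adag n m (A xd))‖ := hc _ (hxW m)
      have h2 : ‖A (Adag n m (A xd)) - _root_.proj (Ym m) (A (Adag n m (A xd)))‖
          ≤ c/2 * ‖Adag n m (A xd)‖ := by
        have := hM m hm _ (hxW m)
        simpa using this
      have h3 : ‖_root_.proj (Ym m) (A (Adag n m (A xd)))‖ ≤ Cy := by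
        rw [hQAx n m]; exact hCy n m
      have h4 : ‖A (Adag n m (A xd))‖
          ≤ ‖A (Adag n m (A xd)) - _root_.proj (Ym m) (A (Adag n m (A xd)))‖
            + ‖_root_.proj (Ym m) (A (Adag n m (A xd)))‖ := by
        have := norm_add_le (A (Adag n m (A xd)) - _root_.proj (Ym m) (A (Adag n m (A xd))))
          (_root_.proj (Ym m) (A (Adag n m (A xd))))
        rw [sub_add_cancel] at this
        exact this
      have h5 : ‖Adag n m (A xd)‖ ≤ Cy / (c/2) := by
        rw [le_div_iff₀ (half_pos hc0)]
        nlinarith [norm_nonneg (Adag n m (A xd))]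
      linarith
    · push_neg at hm
      have := Finset.single_le_sum (f := fun j => ‖Adag n j (A xd)‖)
        (fun j _ => norm_nonneg _) (Finset.mem_range.mpr hm)
      linarith
  -- column bounds
  have hcol : ∀ m : ℕ, ∃ Dc : ℝ, ∀ n : ℕ, ‖Adag n m (A xd)‖ ≤ Dc := by
    intro m
    set V : Submodule ℝ X :=
      Submodule.map (ContinuousLinearMap.adjoint A).toLinearMap (Ym m) with hVdef
    have hvV : ∀ n, ContinuousLinearMap.adjoint A (_root_.proj (Ym m)
        (ContinuousLinearMap.adjoint (Adag n m) (Adag n m (A xd)))) ∈ V := by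
      intro n
      exact Submodule.mem_map_of_mem (proj_mem _ _)
    have hinj : ∀ v ∈ V, ((_root_.proj (Ym m)).comp A) v = 0 → v = 0 := by
      intro v hv h0
      obtain ⟨u, hu, huv⟩ := hv
      have huv' : ContinuousLinearMap.adjoint A u = v := huv
      have h0' : _root_.proj (Ym m) (A v) = 0 := by simpa using h0
      have e1 : @inner ℝ X _ v v = (0:ℝ) := by
        calc @inner ℝ X _ v v
            = @inner ℝ X _ (ContinuousLinearMap.adjoint A u) v := by rw [huv']
          _ = @inner ℝ Y _ u (A v) := ContinuousLinearMap.adjoint_inner_left A v u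
          _ = @inner ℝ Y _ (_root_.proj (Ym m) u) (A v) := by rw [proj_eq_self (Ym m) hu]
          _ = @inner ℝ Y _ u (_root_.proj (Ym m) (A v)) := inner_proj_left _ _ _
          _ = 0 := by rw [h0', inner_zero_right]
      exact inner_self_eq_zero.mp e1
    obtain ⟨c, hc0, hc⟩ := lowerBound V ((_root_.proj (Ym m)).comp A) hinj
    have hεpos : 0 < c / (2 * (‖A‖ + 1)) := by positivity
    obtain ⟨N, hN⟩ := shrink V (fun k => ContinuousLinearMap.id ℝ X - _root_.proj (Xn k))
      (by
        intro v hv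
        have h0 : Tendsto (fun k => v - _root_.proj (Xn k) v) atTop (𝓝 (v - v)) :=
          tendsto_const_nhds.sub (hPlim v)
        simpa using h0) hεpos
    refine ⟨Cy / (c/2) + ∑ j ∈ Finset.range N, ‖Adag j m (A xd)‖, fun n => ?_⟩
    have hsum0 : 0 ≤ ∑ j ∈ Finset.range N, ‖Adag j m (A xd)‖ :=
      Finset.sum_nonneg fun j _ => norm_nonneg _
    have hq0 : 0 ≤ Cy / (c/2) := by positivity
    by_cases hn : N ≤ n
    · set v : X := ContinuousLinearMap.adjoint A (_root_.proj (Ym m)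
        (ContinuousLinearMap.adjoint (Adag n m) (Adag n m (A xd)))) with hvdef
      have hvmem : v ∈ V := hvV n
      have hxv : Adag n m (A xd) = _root_.proj (Xn n) v := hxPv n m
      have hnx : ‖Adag n m (A xd)‖ ≤ ‖v‖ := by
        rw [hxv]; exact norm_proj_le _ _
      have h1 : c * ‖v‖ ≤ ‖_root_.proj (Ym m) (A v)‖ := by
        have := hc v hvmem
        simpa using this
      have h2 : ‖v - _root_.proj (Xn n) v‖ ≤ c / (2 * (‖A‖ + 1)) * ‖v‖ := by
        have := hN n hn v hvmem
        simpa using this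
      have h3 : ‖_root_.proj (Ym m) (A (_root_.proj (Xn n) v))‖ ≤ Cy := by
        rw [← hxv, hQAx n m]; exact hCy n m
      have hkey : ‖A‖ * (c / (2 * (‖A‖ + 1))) ≤ c / 2 := by
        rw [mul_div_assoc']
        rw [div_le_div_iff₀ (by positivity) (by norm_num : (0:ℝ) < 2)]
        nlinarith [norm_nonneg A, hc0.le]
      have t : ‖_root_.proj (Ym m) (A v) - _root_.proj (Ym m) (A (_root_.proj (Xn n) v))‖
          ≤ (c/2) * ‖v‖ := by
        calc ‖_root_.proj (Ym m) (A v) - _root_.proj (Ym m) (A (_root_.proj (Xn n) v))‖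
            = ‖_root_.proj (Ym m) (A (v - _root_.proj (Xn n) v))‖ := by rw [map_sub, map_sub]
          _ ≤ ‖A (v - _root_.proj (Xn n) v)‖ := norm_proj_le _ _
          _ ≤ ‖A‖ * ‖v - _root_.proj (Xn n) v‖ := A.le_opNorm _
          _ ≤ ‖A‖ * (c / (2 * (‖A‖ + 1)) * ‖v‖) := mul_le_mul_of_nonneg_left h2 (norm_nonneg _)
          _ = (‖A‖ * (c / (2 * (‖A‖ + 1)))) * ‖v‖ := by ring
          _ ≤ (c/2) * ‖v‖ := mul_le_mul_of_nonneg_right hkey (norm_nonneg _)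
      have h4 : ‖_root_.proj (Ym m) (A v)‖ ≤ Cy + (c/2) * ‖v‖ := by
        have htri := norm_add_le (_root_.proj (Ym m) (A (_root_.proj (Xn n) v)))
          (_root_.proj (Ym m) (A v) - _root_.proj (Ym m) (A (_root_.proj (Xn n) v)))
        rw [add_sub_cancel] at htri
        calc ‖_root_.proj (Ym m) (A v)‖
            ≤ ‖_root_.proj (Ym m) (A (_root_.proj (Xn n) v))‖
              + ‖_root_.proj (Ym m) (A v) - _root_.proj (Ym m) (A (_root_.proj (Xn n) v))‖ := htri
          _ ≤ Cy + (c/2) * ‖v‖ := add_le_add h3 t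
      have h5 : ‖v‖ ≤ Cy / (c/2) := by
        rw [le_div_iff₀ (half_pos hc0)]
        nlinarith [norm_nonneg v]
      linarith
    · push_neg at hn
      have := Finset.single_le_sum (f := fun j => ‖Adag j m (A xd)‖)
        (fun j _ => norm_nonneg _) (Finset.mem_range.mpr hn)
      linarith
  -- the equivalence
  constructor
  · intro hconv
    constructor
    · -- uniform boundedness
      choose Crow hCrow using hrow
      choose Dcol hDcol using hcol
      have hCrow0 : ∀ n, 0 ≤ Crow n := fun n => le_trans (norm_nonneg _) (hCrow n 0)
      have hDcol0 : ∀ m, 0 ≤ Dcol m := fun m => le_trans (norm_nonneg _) (hDcol m 0)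
      have hpt : ∀ z : X, ∃ Cz : ℝ, ∀ p : ℕ × ℕ,
          ‖(innerSL ℝ (Adag p.1 p.2 (A xd))) z‖ ≤ Cz := by
        intro z
        obtain ⟨P0, hP0⟩ := Metric.tendsto_atTop.mp (hconv z) 1 one_pos
        set S1 : ℝ := ∑ j ∈ Finset.range P0.1, Crow j with hS1
        set S2 : ℝ := ∑ j ∈ Finset.range P0.2, Dcol j with hS2
        have hS10 : 0 ≤ S1 := Finset.sum_nonneg fun j _ => hCrow0 j
        have hS20 : 0 ≤ S2 := Finset.sum_nonneg fun j _ => hDcol0 j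
        refine ⟨(|@inner ℝ X _ xd z| + 1) + (S1 + S2) * ‖z‖, fun p => ?_⟩
        have happ : ‖(innerSL ℝ (Adag p.1 p.2 (A xd))) z‖
            = |@inner ℝ X _ (Adag p.1 p.2 (A xd)) z| := by
          rw [innerSL_apply_apply, Real.norm_eq_abs]
        rw [happ]
        have hxz : |@inner ℝ X _ (Adag p.1 p.2 (A xd)) z| ≤ ‖Adag p.1 p.2 (A xd)‖ * ‖z‖ :=
          abs_real_inner_le_norm _ _
        by_cases hp : P0 ≤ p
        · have h1 := hP0 p hp
          rw [Real.dist_eq] at h1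
          have h2 : |@inner ℝ X _ (Adag p.1 p.2 (A xd)) z| ≤ |@inner ℝ X _ xd z| + 1 := by
            have := abs_add_le (@inner ℝ X _ (Adag p.1 p.2 (A xd)) z - @inner ℝ X _ xd z)
              (@inner ℝ X _ xd z)
            rw [sub_add_cancel] at this
            linarith
          nlinarith [mul_nonneg (add_nonneg hS10 hS20) (norm_nonneg z)]
        · rw [Prod.le_def, not_and_or, not_le, not_le] at hp
          rcases hp with h | h
          · have hb : ‖Adag p.1 p.2 (A xd)‖ ≤ S1 :=
              le_trans (hCrow p.1 p.2) (Finset.single_le_sum (fun j _ => hCrow0 j)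
                (Finset.mem_range.mpr h))
            have habs : (0:ℝ) ≤ |@inner ℝ X _ xd z| + 1 := by positivity
            nlinarith [norm_nonneg z, norm_nonneg (Adag p.1 p.2 (A xd))]
          · have hb : ‖Adag p.1 p.2 (A xd)‖ ≤ S2 :=
              le_trans (hDcol p.2 p.1) (Finset.single_le_sum (fun j _ => hDcol0 j)
                (Finset.mem_range.mpr h))
            have habs : (0:ℝ) ≤ |@inner ℝ X _ xd z| + 1 := by positivity
            nlinarith [norm_nonneg z, norm_nonneg (Adag p.1 p.2 (A xd))]
      obtain ⟨C', hC'⟩ :=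
        banach_steinhaus (g := fun p : ℕ × ℕ => innerSL ℝ (Adag p.1 p.2 (A xd))) hpt
      exact ⟨C', fun p => le_trans (le_of_eq (innerSL_apply_norm ℝ (Adag p.1 p.2 (A xd))).symm) (hC' p)⟩
    · -- kernel projections tend weakly to zero
      intro z
      have hswap : ∀ p : ℕ × ℕ,
          @inner ℝ X _ (_root_.proj (LinearMap.ker (A : X →ₗ[ℝ] Y)) (Adag p.1 p.2 (A xd))) z
          = @inner ℝ X _ (Adag p.1 p.2 (A xd)) (_root_.proj (LinearMap.ker (A : X →ₗ[ℝ] Y)) z) :=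
        fun p => inner_proj_left _ _ _
      have hlim := hconv (_root_.proj (LinearMap.ker (A : X →ₗ[ℝ] Y)) z)
      have hz0 : @inner ℝ X _ xd (_root_.proj (LinearMap.ker (A : X →ₗ[ℝ] Y)) z) = 0 := by
        rw [← inner_proj_left, proj_zero_of_orth _ hxd, inner_zero_left]
      rw [hz0] at hlim
      simpa only [hswap] using hlim
  · rintro ⟨⟨C, hC⟩, hker⟩
    have hC0 : 0 ≤ C := le_trans (norm_nonneg _) (hC (0, 0))
    -- main convergence against vectors in the range of A†
    have hmain : ∀ w : Y, Tendsto
        (fun p : ℕ × ℕ => @inner ℝ X _ (Adag p.1 p.2 (A xd)) (ContinuousLinearMap.adjoint A w))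
        atTop (𝓝 (@inner ℝ X _ xd (ContinuousLinearMap.adjoint A w))) := by
      intro w
      rw [← tendsto_sub_nhds_zero_iff]
      have hbound : ∀ p : ℕ × ℕ,
          ‖@inner ℝ X _ (Adag p.1 p.2 (A xd)) (ContinuousLinearMap.adjoint A w)
            - @inner ℝ X _ xd (ContinuousLinearMap.adjoint A w)‖ ≤
          C * ‖ContinuousLinearMap.adjoint A (w - _root_.proj (Ym p.2) w)‖
          + ‖A‖ * ‖xd - _root_.proj (Xn p.1) xd‖ * ‖w‖
          + ‖_root_.proj (Ym p.2) (A xd) - A xd‖ * ‖w‖ := by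
        rintro ⟨n, m⟩
        have e0 : @inner ℝ X _ (Adag n m (A xd)) (ContinuousLinearMap.adjoint A w)
            = @inner ℝ Y _ (A (Adag n m (A xd))) w :=
          ContinuousLinearMap.adjoint_inner_right _ _ _
        have e0' : @inner ℝ X _ xd (ContinuousLinearMap.adjoint A w)
            = @inner ℝ Y _ (A xd) w := ContinuousLinearMap.adjoint_inner_right _ _ _
        have dec : @inner ℝ Y _ (A (Adag n m (A xd))) w - @inner ℝ Y _ (A xd) w
            = @inner ℝ Y _ (A (Adag n m (A xd)) - _root_.proj (Ym m) (A (Adag n m (A xd)))) w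
              + @inner ℝ Y _ (Amn A (Xn n) (Ym m) (Adag n m (A xd))
                  - _root_.proj (Ym m) (A xd)) w
              + @inner ℝ Y _ (_root_.proj (Ym m) (A xd) - A xd) w := by
          rw [← hQAx n m, inner_sub_left, inner_sub_left, inner_sub_left]
          ring
        have t1 : ‖@inner ℝ Y _ (A (Adag n m (A xd))
            - _root_.proj (Ym m) (A (Adag n m (A xd)))) w‖
            ≤ C * ‖ContinuousLinearMap.adjoint A (w - _root_.proj (Ym m) w)‖ := by
          have e1 : @inner ℝ Y _ (A (Adag n m (A xd))
              - _root_.proj (Ym m) (A (Adag n m (A xd)))) w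
              = @inner ℝ X _ (Adag n m (A xd))
                  (ContinuousLinearMap.adjoint A (w - _root_.proj (Ym m) w)) := by
            rw [ContinuousLinearMap.adjoint_inner_right, inner_sub_left, inner_sub_right,
              inner_proj_left]
          rw [e1]
          have hb := norm_inner_le_norm (𝕜 := ℝ) (Adag n m (A xd))
            (ContinuousLinearMap.adjoint A (w - _root_.proj (Ym m) w))
          exact hb.trans (mul_le_mul_of_nonneg_right (hC (n, m)) (norm_nonneg _))
        have t2 : ‖@inner ℝ Y _ (Amn A (Xn n) (Ym m) (Adag n m (A xd))
            - _root_.proj (Ym m) (A xd)) w‖ ≤ ‖A‖ * ‖xd - _root_.proj (Xn n) xd‖ * ‖w‖ := by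
          have hb := norm_inner_le_norm (𝕜 := ℝ)
            (Amn A (Xn n) (Ym m) (Adag n m (A xd)) - _root_.proj (Ym m) (A xd)) w
          exact hb.trans (mul_le_mul_of_nonneg_right (hE1 n m) (norm_nonneg _))
        have t3 : ‖@inner ℝ Y _ (_root_.proj (Ym m) (A xd) - A xd) w‖
            ≤ ‖_root_.proj (Ym m) (A xd) - A xd‖ * ‖w‖ := norm_inner_le_norm _ _
        rw [e0, e0', dec]
        exact le_trans norm_add₃_le (add_le_add (add_le_add t1 t2) t3)
      apply squeeze_zero_norm hbound
      have l1 : Tendsto (fun p : ℕ × ℕ =>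
          C * ‖ContinuousLinearMap.adjoint A (w - _root_.proj (Ym p.2) w)‖) atTop (𝓝 0) := by
        have h0 : Tendsto (fun m => w - _root_.proj (Ym m) w) atTop (𝓝 0) := by
          have h0' : Tendsto (fun m => w - _root_.proj (Ym m) w) atTop (𝓝 (w - w)) :=
            tendsto_const_nhds.sub (hQlim w)
          simpa using h0'
        have h1 : Tendsto (fun m =>
            ‖ContinuousLinearMap.adjoint A (w - _root_.proj (Ym m) w)‖) atTop (𝓝 0) := by
          have := (((ContinuousLinearMap.adjoint A).continuous.tendsto 0).comp h0).norm
          simpa using this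
        have := (h1.comp hsnd).const_mul C
        simpa using this
      have l2 : Tendsto (fun p : ℕ × ℕ =>
          ‖A‖ * ‖xd - _root_.proj (Xn p.1) xd‖ * ‖w‖) atTop (𝓝 0) := by
        have h0 : Tendsto (fun n => xd - _root_.proj (Xn n) xd) atTop (𝓝 0) := by
          have h0' : Tendsto (fun n => xd - _root_.proj (Xn n) xd) atTop (𝓝 (xd - xd)) :=
            tendsto_const_nhds.sub (hPlim xd)
          simpa using h0'
        have h1 := ((h0.norm.comp hfst).const_mul ‖A‖).mul_const ‖w‖
        simpa using h1
      have l3 : Tendsto (fun p : ℕ × ℕ =>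
          ‖_root_.proj (Ym p.2) (A xd) - A xd‖ * ‖w‖) atTop (𝓝 0) := by
        have h0 : Tendsto (fun m => _root_.proj (Ym m) (A xd) - A xd) atTop (𝓝 0) := by
          have h0' : Tendsto (fun m => _root_.proj (Ym m) (A xd) - A xd) atTop
              (𝓝 (A xd - A xd)) := (hQlim (A xd)).sub tendsto_const_nhds
          simpa using h0'
        have h1 := (h0.norm.comp hsnd).mul_const ‖w‖
        simpa using h1
      have := (l1.add l2).add l3
      simpa using this
    -- identify the orthogonal complement of the kernel with the closure of the range of A†
    have hkerorth : LinearMap.ker (A : X →ₗ[ℝ] Y) = (LinearMap.range (ContinuousLinearMap.adjoint A : Y →ₗ[ℝ] X))ᗮ := by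
      ext v
      rw [Submodule.mem_orthogonal]
      constructor
      · intro hv u hu
        obtain ⟨s, hs⟩ := hu
        rw [← hs, ContinuousLinearMap.coe_coe, ContinuousLinearMap.adjoint_inner_left,
          (show A v = 0 from LinearMap.mem_ker.mp hv),
          inner_zero_right]
      · intro hv
        have := hv (ContinuousLinearMap.adjoint A (A v)) ⟨A v, rfl⟩
        rw [ContinuousLinearMap.adjoint_inner_left] at this
        exact LinearMap.mem_ker.mpr (inner_self_eq_zero.mp this)
    have hclos : (LinearMap.ker (A : X →ₗ[ℝ] Y))ᗮ
        = (LinearMap.range (ContinuousLinearMap.adjoint A : Y →ₗ[ℝ] X)).topologicalClosure := by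
      rw [hkerorth, Submodule.orthogonal_orthogonal_eq_closure]
    intro z
    obtain ⟨z', hz'def⟩ : ∃ z'' : X, z'' = z - _root_.proj (LinearMap.ker (A : X →ₗ[ℝ] Y)) z := ⟨_, rfl⟩
    have hz'mem : z' ∈ closure ((LinearMap.range (ContinuousLinearMap.adjoint A : Y →ₗ[ℝ] X)) : Set X) := by
      have h1 : z' ∈ (LinearMap.ker (A : X →ₗ[ℝ] Y))ᗮ := by
        rw [hz'def]
        exact Submodule.sub_starProjection_mem_orthogonal z
      rw [hclos] at h1
      exact h1
    have hz2 : Tendsto (fun p : ℕ × ℕ => @inner ℝ X _ (Adag p.1 p.2 (A xd)) z') atTop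
        (𝓝 (@inner ℝ X _ xd z')) := by
      rw [Metric.tendsto_atTop]
      intro ε hε
      set D : ℝ := C + ‖xd‖ + 1 with hDdef
      have hD0 : 0 < D := by positivity
      obtain ⟨a, ha, hdista⟩ := Metric.mem_closure_iff.mp hz'mem (ε / (2 * D)) (by positivity)
      obtain ⟨w, hw⟩ := ha
      obtain ⟨P1, hP1⟩ := Metric.tendsto_atTop.mp (hmain w) (ε / 2) (by positivity)
      refine ⟨P1, fun p hp => ?_⟩
      have h1 := hP1 p hp
      rw [Real.dist_eq] at h1 ⊢
      have hdist' : ‖z' - ContinuousLinearMap.adjoint A w‖ < ε / (2 * D) := by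
        rw [dist_eq_norm] at hdista
        rw [← hw] at hdista
        exact hdista
      have split : @inner ℝ X _ (Adag p.1 p.2 (A xd)) z' - @inner ℝ X _ xd z'
          = (@inner ℝ X _ (Adag p.1 p.2 (A xd)) (z' - ContinuousLinearMap.adjoint A w)
              - @inner ℝ X _ xd (z' - ContinuousLinearMap.adjoint A w))
            + (@inner ℝ X _ (Adag p.1 p.2 (A xd)) (ContinuousLinearMap.adjoint A w)
              - @inner ℝ X _ xd (ContinuousLinearMap.adjoint A w)) := by
        rw [inner_sub_right, inner_sub_right]
        ring
      have b1 : |@inner ℝ X _ (Adag p.1 p.2 (A xd)) (z' - ContinuousLinearMap.adjoint A w)|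
          ≤ C * ‖z' - ContinuousLinearMap.adjoint A w‖ := by
        have hb := abs_real_inner_le_norm (Adag p.1 p.2 (A xd))
          (z' - ContinuousLinearMap.adjoint A w)
        have hb2 : ‖Adag p.1 p.2 (A xd)‖ * ‖z' - ContinuousLinearMap.adjoint A w‖
            ≤ C * ‖z' - ContinuousLinearMap.adjoint A w‖ :=
          mul_le_mul_of_nonneg_right (hC p) (norm_nonneg _)
        linarith
      have b2 : |@inner ℝ X _ xd (z' - ContinuousLinearMap.adjoint A w)|
          ≤ ‖xd‖ * ‖z' - ContinuousLinearMap.adjoint A w‖ :=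
        abs_real_inner_le_norm _ _
      have hnn : 0 ≤ ‖z' - ContinuousLinearMap.adjoint A w‖ := norm_nonneg _
      rw [split]
      have habsadd := abs_add_le
        (@inner ℝ X _ (Adag p.1 p.2 (A xd)) (z' - ContinuousLinearMap.adjoint A w)
          - @inner ℝ X _ xd (z' - ContinuousLinearMap.adjoint A w))
        (@inner ℝ X _ (Adag p.1 p.2 (A xd)) (ContinuousLinearMap.adjoint A w)
          - @inner ℝ X _ xd (ContinuousLinearMap.adjoint A w))
      have habs := abs_sub (@inner ℝ X _ (Adag p.1 p.2 (A xd))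
        (z' - ContinuousLinearMap.adjoint A w))
        (@inner ℝ X _ xd (z' - ContinuousLinearMap.adjoint A w))
      have hmul : (C + ‖xd‖) * ‖z' - ContinuousLinearMap.adjoint A w‖ < ε / 2 := by
        have hCxd : C + ‖xd‖ < D := by rw [hDdef]; linarith
        have h2 : (C + ‖xd‖) * ‖z' - ContinuousLinearMap.adjoint A w‖
            ≤ D * ‖z' - ContinuousLinearMap.adjoint A w‖ :=
          mul_le_mul_of_nonneg_right hCxd.le hnn
        have h3 : D * ‖z' - ContinuousLinearMap.adjoint A w‖ < D * (ε / (2 * D)) :=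
          (mul_lt_mul_iff_right₀ hD0).mpr hdist'
        have h4 : D * (ε / (2 * D)) = ε / 2 := by field_simp
        linarith
      nlinarith [b1, b2, h1, habsadd, habs]
    -- assemble
    have hz1 : Tendsto (fun p : ℕ × ℕ =>
        @inner ℝ X _ (Adag p.1 p.2 (A xd)) (_root_.proj (LinearMap.ker (A : X →ₗ[ℝ] Y)) z)) atTop (𝓝 0) := by
      have hswap : ∀ p : ℕ × ℕ,
          @inner ℝ X _ (Adag p.1 p.2 (A xd)) (_root_.proj (LinearMap.ker (A : X →ₗ[ℝ] Y)) z)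
          = @inner ℝ X _ (_root_.proj (LinearMap.ker (A : X →ₗ[ℝ] Y)) (Adag p.1 p.2 (A xd))) z :=
        fun p => (inner_proj_left _ _ _).symm
      simpa only [hswap] using hker z
    have hcomb := hz1.add hz2
    have hfun : ∀ p : ℕ × ℕ,
        @inner ℝ X _ (Adag p.1 p.2 (A xd)) (_root_.proj (LinearMap.ker (A : X →ₗ[ℝ] Y)) z)
          + @inner ℝ X _ (Adag p.1 p.2 (A xd)) z'
        = @inner ℝ X _ (Adag p.1 p.2 (A xd)) z := by
      intro p
      rw [hz'def, ← inner_add_right]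
      congr 1
      abel
    have hlim0 : @inner ℝ X _ xd (_root_.proj (LinearMap.ker (A : X →ₗ[ℝ] Y)) z) = 0 := by
      rw [← inner_proj_left, proj_zero_of_orth _ hxd, inner_zero_left]
    have hval : (0:ℝ) + @inner ℝ X _ xd z' = @inner ℝ X _ xd z := by
      rw [zero_add, hz'def, inner_sub_right, hlim0]
      ring
    have hfunext : (fun p : ℕ × ℕ => @inner ℝ X _ (Adag p.1 p.2 (A xd)) z)
        = fun p : ℕ × ℕ => @inner ℝ X _ (Adag p.1 p.2 (A xd)) (_root_.proj (LinearMap.ker (A : X →ₗ[ℝ] Y)) z)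
            + @inner ℝ X _ (Adag p.1 p.2 (A xd)) z' := by
      funext p
      exact (hfun p).symm
    rw [hfunext, ← hval]
    exact hcomb
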